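/- arXiv:0909.0692 — 2 statements merged into one kernel-verified Lean document; each statement's English description precedes it below -/
import Mathlib

section
/- (Hardy inequality on the Poincaré disk) For every u ∈ C_c^∞(B), ∫_B |∇u(x)|² dx ≥ (1/4) ∫_B u(x)² / (1-|x|²)² dx. -/
open MeasureTheory Real Filter Set Metric
open scoped Topology RealInnerProductSpace ENNReal

noncomputable section

/-- The open unit disk in `ℂ`. -/
def unitDisk : Set ℂ := {z : ℂ | ‖z‖ < 1}

/-- The Möbius transformation `η_ζ(z) = (z - ζ)/(1 - conj(ζ)·z)`. -/
def eta (ζ z : ℂ) : ℂ := (z - ζ) / (1 - (starRingEnd ℂ) ζ * z)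

/- ### Auxiliary material for Hardy's inequality -/

lemma hardyAux_norm_sq (z : ℂ) : ‖z‖^2 = z.re*z.re + z.im*z.im := by
  simp [Complex.sq_norm, Complex.normSq_apply]

/-- Integral of a directional derivative of a smooth compactly supported function vanishes. -/
lemma hardyAux_ibp (P : ℂ → ℝ) (hP : ContDiff ℝ (⊤ : ℕ∞) P) (hPc : HasCompactSupport P) (v : ℂ) :
    ∫ z, fderiv ℝ P z v = 0 := by
  have hPd : Differentiable ℝ P := hP.differentiable (by simp)
  have hcont : Continuous fun z => fderiv ℝ P z v :=
    (hP.continuous_fderiv (by simp)).clm_apply continuous_const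
  have hcs : HasCompactSupport fun z => fderiv ℝ P z v := by
    apply HasCompactSupport.intro (hPc.isCompact)
    intro x hx
    have h0 : fderiv ℝ P x = 0 := by
      by_contra hne
      exact hx (support_fderiv_subset (𝕜 := ℝ) (Function.mem_support.mpr hne))
    rw [h0]; rfl
  have h := integral_mul_fderiv_eq_neg_fderiv_mul_of_integrable
    (f := fun _ : ℂ => (1:ℝ)) (g := P) (v := v) (μ := volume)
    ?_ ?_ ?_ (fun x _ => differentiableAt_const (1:ℝ)) (fun x _ => hPd x)
  · simpa using h
  · simp [fderiv_const]
  · simpa using hcont.integrable_of_hasCompactSupport hcs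
  · simpa using hP.continuous.integrable_of_hasCompactSupport hPc

/-- Gluing: `u² · g` is smooth if `g` is smooth on the disk and `u` is supported there. -/
lemma hardyAux_glue (u : ℂ → ℝ) (hu : ContDiff ℝ (⊤ : ℕ∞) u) (hsupp : tsupport u ⊆ unitDisk)
    (g : ℂ → ℝ) (hg : ∀ z ∈ unitDisk, ContDiffAt ℝ (⊤ : ℕ∞) g z) :
    ContDiff ℝ (⊤ : ℕ∞) (fun z => u z * u z * g z) := by
  rw [contDiff_iff_contDiffAt]
  intro z
  by_cases hz : z ∈ unitDisk
  · exact (hu.contDiffAt.mul hu.contDiffAt).mul (hg z hz)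
  · have hz' : z ∉ tsupport u := fun h => hz (hsupp h)
    have : (fun z => u z * u z * g z) =ᶠ[nhds z] 0 := by
      filter_upwards [(isClosed_tsupport u).isOpen_compl.mem_nhds hz'] with y hy
      simp [image_eq_zero_of_notMem_tsupport hy]
    exact (contDiffAt_const (c := 0)).congr_of_eventuallyEq this

lemma hardyAux_cpt (u : ℂ → ℝ) (hcpt : HasCompactSupport u) (g : ℂ → ℝ) :
    HasCompactSupport (fun z => u z * u z * g z) := by
  apply HasCompactSupport.intro hcpt
  intro x hx
  simp [image_eq_zero_of_notMem_tsupport hx]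

lemma hardyAux_smooth_inner (z : ℂ) (hz : 1 - z.re*z.re - z.im*z.im ≠ 0) :
    ContDiffAt ℝ (⊤ : ℕ∞) (fun w : ℂ => (2*(1 - w.re*w.re - w.im*w.im))⁻¹) z := by
  have hre : ContDiffAt ℝ (⊤ : ℕ∞) (fun w : ℂ => w.re) z := Complex.reCLM.contDiff.contDiffAt
  have him : ContDiffAt ℝ (⊤ : ℕ∞) (fun w : ℂ => w.im) z := Complex.imCLM.contDiff.contDiffAt
  exact (contDiffAt_const.mul ((contDiffAt_const.sub (hre.mul hre)).sub (him.mul him))).inv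
    (by simpa using hz)

/-- The fderiv of `u²·(x·(2ρ)⁻¹)` evaluated at direction `1`. -/
lemma hardyAux_fderivP (u : ℂ → ℝ) (hu : ContDiff ℝ (⊤ : ℕ∞) u) (z : ℂ)
    (hz : 1 - z.re*z.re - z.im*z.im ≠ 0) :
    fderiv ℝ (fun w => u w * u w * (w.re * (2*(1 - w.re*w.re - w.im*w.im))⁻¹)) z 1 =
      2 * u z * fderiv ℝ u z 1 * (z.re * (2*(1 - z.re*z.re - z.im*z.im))⁻¹)
        + (u z * u z) * ((2*(1 - z.re*z.re - z.im*z.im))⁻¹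
            + z.re * (4*z.re) / (2*(1 - z.re*z.re - z.im*z.im))^2) := by
  have hu' : HasFDerivAt u (fderiv ℝ u z) z := (hu.differentiable (by simp) z).hasFDerivAt
  have hre : HasFDerivAt (fun w : ℂ => w.re) Complex.reCLM z := Complex.reCLM.hasFDerivAt
  have him : HasFDerivAt (fun w : ℂ => w.im) Complex.imCLM z := Complex.imCLM.hasFDerivAt
  have hn : HasFDerivAt (fun w : ℂ => 1 - w.re*w.re - w.im*w.im) _ z :=
    ((hasFDerivAt_const (1:ℝ) z).sub (hre.mul hre)).sub (him.mul him)
  have h2n : HasFDerivAt (fun w : ℂ => 2 * (1 - w.re*w.re - w.im*w.im)) _ z := hn.const_mul 2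
  have hinv : HasFDerivAt (fun w : ℂ => (2*(1 - w.re*w.re - w.im*w.im))⁻¹) _ z :=
    (hasDerivAt_inv (by simpa using hz)).comp_hasFDerivAt z h2n
  have hP : HasFDerivAt (fun w => u w * u w * (w.re * (2*(1 - w.re*w.re - w.im*w.im))⁻¹)) _ z :=
    (hu'.mul hu').mul (hre.mul hinv)
  rw [hP.fderiv]
  simp
  ring

/-- The fderiv of `u²·(y·(2ρ)⁻¹)` evaluated at direction `I`. -/
lemma hardyAux_fderivQ (u : ℂ → ℝ) (hu : ContDiff ℝ (⊤ : ℕ∞) u) (z : ℂ)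
    (hz : 1 - z.re*z.re - z.im*z.im ≠ 0) :
    fderiv ℝ (fun w => u w * u w * (w.im * (2*(1 - w.re*w.re - w.im*w.im))⁻¹)) z Complex.I =
      2 * u z * fderiv ℝ u z Complex.I * (z.im * (2*(1 - z.re*z.re - z.im*z.im))⁻¹)
        + (u z * u z) * ((2*(1 - z.re*z.re - z.im*z.im))⁻¹
            + z.im * (4*z.im) / (2*(1 - z.re*z.re - z.im*z.im))^2) := by
  have hu' : HasFDerivAt u (fderiv ℝ u z) z := (hu.differentiable (by simp) z).hasFDerivAt
  have hre : HasFDerivAt (fun w : ℂ => w.re) Complex.reCLM z := Complex.reCLM.hasFDerivAt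
  have him : HasFDerivAt (fun w : ℂ => w.im) Complex.imCLM z := Complex.imCLM.hasFDerivAt
  have hn : HasFDerivAt (fun w : ℂ => 1 - w.re*w.re - w.im*w.im) _ z :=
    ((hasFDerivAt_const (1:ℝ) z).sub (hre.mul hre)).sub (him.mul him)
  have h2n : HasFDerivAt (fun w : ℂ => 2 * (1 - w.re*w.re - w.im*w.im)) _ z := hn.const_mul 2
  have hinv : HasFDerivAt (fun w : ℂ => (2*(1 - w.re*w.re - w.im*w.im))⁻¹) _ z :=
    (hasDerivAt_inv (by simpa using hz)).comp_hasFDerivAt z h2n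
  have hQ : HasFDerivAt (fun w => u w * u w * (w.im * (2*(1 - w.re*w.re - w.im*w.im))⁻¹)) _ z :=
    (hu'.mul hu').mul (him.mul hinv)
  rw [hQ.fderiv]
  simp
  ring

/-- The pointwise Hardy-type algebraic inequality. -/
lemma hardyAux_pointwise (A B c X Y : ℝ) (h : X*X + Y*Y < 1) :
    1/4 * (c * c * ((1 - X*X - Y*Y)^2)⁻¹) ≤
      ((A^2 + B^2) +
      ((2*c*A*(X*(2*(1 - X*X - Y*Y))⁻¹)
          + c*c*((2*(1 - X*X - Y*Y))⁻¹ + X*(4*X)/(2*(1 - X*X - Y*Y))^2))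
       + (2*c*B*(Y*(2*(1 - X*X - Y*Y))⁻¹)
          + c*c*((2*(1 - X*X - Y*Y))⁻¹ + Y*(4*Y)/(2*(1 - X*X - Y*Y))^2)))) := by
  have hN : 0 < 1 - X*X - Y*Y := by nlinarith
  set N := 1 - X*X - Y*Y with hNe
  have hNne : N ≠ 0 := ne_of_gt hN
  set D := (2*N)⁻¹ with hD
  have hDpos : 0 < D := by positivity
  have hD2N : 2*N*D = 1 := mul_inv_cancel₀ (by positivity)
  have e1 : (N^2)⁻¹ = 4*D^2 := by rw [hD]; field_simp; ring
  have e2 : ∀ t : ℝ, t / (2*N)^2 = t * D^2 := by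
    intro t; rw [hD, div_eq_mul_inv, ← inv_pow]
  rw [e1, e2, e2]
  have h2D : 2*D = 4*N*D^2 := by nlinarith [hD2N]
  nlinarith [sq_nonneg (A + c*X*D), sq_nonneg (B + c*Y*D), h2D,
    mul_nonneg (sq_nonneg (c*D)) (by nlinarith : (0:ℝ) ≤ 3 - (X*X+Y*Y)),
    sq_nonneg (c*D)]

/-- Hardy's inequality on the Poincaré disk:
`∫_B |∇u|² dx ≥ (1/4) ∫_B u² / (1-|x|²)² dx` for test functions on the disk. -/
theorem hardy_inequality_poincare_disk (u : ℂ → ℝ) (hu : ContDiff ℝ (⊤ : ℕ∞) u)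
    (hcpt : HasCompactSupport u) (hsupp : tsupport u ⊆ unitDisk) :
    (1 / 4) * ∫ x in unitDisk, (u x) ^ 2 / (1 - ‖x‖ ^ 2) ^ 2 ≤
      ∫ x in unitDisk, ‖gradient u x‖ ^ 2 := by
  have hUopen : IsOpen unitDisk := isOpen_lt continuous_norm continuous_const
  have hUmeas : MeasurableSet unitDisk := hUopen.measurableSet
  have hpos : ∀ z ∈ unitDisk, 0 < 1 - z.re*z.re - z.im*z.im := by
    intro z hz
    have h1 : ‖z‖ < 1 := hz
    have h2 : ‖z‖^2 < 1 := by nlinarith [norm_nonneg z]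
    rw [hardyAux_norm_sq] at h2
    linarith
  -- notation
  set P : ℂ → ℝ := fun w => u w * u w * (w.re * (2*(1 - w.re*w.re - w.im*w.im))⁻¹) with hPdef
  set Q : ℂ → ℝ := fun w => u w * u w * (w.im * (2*(1 - w.re*w.re - w.im*w.im))⁻¹) with hQdef
  set H : ℂ → ℝ := fun w => u w * u w * (((1 - w.re*w.re - w.im*w.im))^2)⁻¹ with hHdef
  set G2 : ℂ → ℝ := fun z => (fderiv ℝ u z 1)^2 + (fderiv ℝ u z Complex.I)^2 with hG2def
  -- smoothness
  have hre : ContDiff ℝ (⊤ : ℕ∞) (fun w : ℂ => w.re) := Complex.reCLM.contDiff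
  have him : ContDiff ℝ (⊤ : ℕ∞) (fun w : ℂ => w.im) := Complex.imCLM.contDiff
  have hPsm : ContDiff ℝ (⊤ : ℕ∞) P := hardyAux_glue u hu hsupp _
    (fun z hz => (hre.contDiffAt).mul (hardyAux_smooth_inner z (ne_of_gt (hpos z hz))))
  have hQsm : ContDiff ℝ (⊤ : ℕ∞) Q := hardyAux_glue u hu hsupp _
    (fun z hz => (him.contDiffAt).mul (hardyAux_smooth_inner z (ne_of_gt (hpos z hz))))
  have hHsm : ContDiff ℝ (⊤ : ℕ∞) H := hardyAux_glue u hu hsupp _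
    (fun z hz => ((((contDiffAt_const.sub ((hre.contDiffAt).mul hre.contDiffAt)).sub
      ((him.contDiffAt).mul him.contDiffAt)).pow 2).inv
        (pow_ne_zero 2 (ne_of_gt (hpos z hz)))))
  -- compact supports
  have hPc : HasCompactSupport P := hardyAux_cpt u hcpt _
  have hQc : HasCompactSupport Q := hardyAux_cpt u hcpt _
  have hHc : HasCompactSupport H := hardyAux_cpt u hcpt _
  -- fderiv vanishing off the support of u
  have hfu0 : ∀ x, x ∉ tsupport u → fderiv ℝ u x = 0 := by
    intro x hx
    by_contra hne
    exact hx (support_fderiv_subset (𝕜 := ℝ) (Function.mem_support.mpr hne))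
  have hsuppP : tsupport P ⊆ tsupport u := by
    apply closure_mono
    intro x hx
    rw [Function.mem_support] at hx ⊢
    intro h0
    apply hx
    rw [hPdef]; simp [h0]
  have hsuppQ : tsupport Q ⊆ tsupport u := by
    apply closure_mono
    intro x hx
    rw [Function.mem_support] at hx ⊢
    intro h0
    apply hx
    rw [hQdef]; simp [h0]
  have hfP0 : ∀ x, x ∉ tsupport u → fderiv ℝ P x = 0 := by
    intro x hx
    by_contra hne
    exact hx (hsuppP (support_fderiv_subset (𝕜 := ℝ) (Function.mem_support.mpr hne)))
  have hfQ0 : ∀ x, x ∉ tsupport u → fderiv ℝ Q x = 0 := by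
    intro x hx
    by_contra hne
    exact hx (hsuppQ (support_fderiv_subset (𝕜 := ℝ) (Function.mem_support.mpr hne)))
  -- the divergence term
  set Dv : ℂ → ℝ := fun z => fderiv ℝ P z 1 + fderiv ℝ Q z Complex.I with hDvdef
  have hDvcont : Continuous Dv :=
    ((hPsm.continuous_fderiv (by simp)).clm_apply continuous_const).add
      ((hQsm.continuous_fderiv (by simp)).clm_apply continuous_const)
  have hDvc : HasCompactSupport Dv := by
    apply HasCompactSupport.intro hcpt
    intro x hx
    rw [hDvdef]
    simp only [hfP0 x hx, hfQ0 x hx]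
    simp
  have hDv0 : ∀ x, x ∉ unitDisk → Dv x = 0 := by
    intro x hx
    have hx' : x ∉ tsupport u := fun h => hx (hsupp h)
    rw [hDvdef]
    simp only [hfP0 x hx', hfQ0 x hx']
    simp
  -- continuity of G2
  have hfc : Continuous (fderiv ℝ u) := hu.continuous_fderiv (by simp)
  have hG2cont : Continuous G2 :=
    ((hfc.clm_apply continuous_const).pow 2).add ((hfc.clm_apply continuous_const).pow 2)
  have hG2c : HasCompactSupport G2 := by
    apply HasCompactSupport.intro hcpt
    intro x hx
    rw [hG2def]
    simp only [hfu0 x hx]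
    simp
  -- integrability
  have hHint : Integrable H := hHsm.continuous.integrable_of_hasCompactSupport hHc
  have hG2int : Integrable G2 := hG2cont.integrable_of_hasCompactSupport hG2c
  have hDvint : Integrable Dv := hDvcont.integrable_of_hasCompactSupport hDvc
  -- rewrite the gradient integrand
  have hgrad : ∀ z : ℂ, ‖gradient u z‖^2 = G2 z := by
    intro z
    have h1 : ∀ v : ℂ, fderiv ℝ u z v = ⟪gradient u z, v⟫ := fun v => by
      rw [gradient, InnerProductSpace.toDual_symm_apply]
    rw [hG2def]
    simp only [h1]
    rw [hardyAux_norm_sq]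
    simp [inner]
    ring
  -- rewrite the LHS integrand
  have hHeq : ∀ x : ℂ, u x ^ 2 / (1 - ‖x‖^2)^2 = H x := by
    intro x
    have h2 : (1 - ‖x‖^2) = (1 - x.re*x.re - x.im*x.im) := by
      rw [hardyAux_norm_sq]; ring
    rw [h2, div_eq_mul_inv, sq (u x), hHdef]
  simp only [hHeq, hgrad]
  -- pointwise inequality on the disk
  have hkey : ∀ z ∈ unitDisk, 1/4 * H z ≤ G2 z + Dv z := by
    intro z hz
    have hzne : 1 - z.re*z.re - z.im*z.im ≠ 0 := ne_of_gt (hpos z hz)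
    have hlt : z.re*z.re + z.im*z.im < 1 := by linarith [hpos z hz]
    rw [hDvdef, hPdef, hQdef, hG2def, hHdef]
    simp only
    rw [hardyAux_fderivP u hu z hzne, hardyAux_fderivQ u hu z hzne]
    exact hardyAux_pointwise (fderiv ℝ u z 1) (fderiv ℝ u z Complex.I) (u z) z.re z.im hlt
  -- integral chain
  calc (1/4) * ∫ x in unitDisk, H x
      = ∫ x in unitDisk, 1/4 * H x := (integral_const_mul _ _).symm
    _ ≤ ∫ x in unitDisk, (G2 x + Dv x) :=
        setIntegral_mono_on ((hHint.integrableOn).const_mul _)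
          ((hG2int.add hDvint).integrableOn) hUmeas hkey
    _ = (∫ x in unitDisk, G2 x) + ∫ x in unitDisk, Dv x :=
        integral_add hG2int.integrableOn hDvint.integrableOn
    _ = ∫ x in unitDisk, G2 x := by
        have e1 : ∫ x in unitDisk, Dv x = ∫ x, Dv x :=
          setIntegral_eq_integral_of_forall_compl_eq_zero hDv0
        have e2 : ∫ x, Dv x = 0 := by
          rw [hDvdef]
          have i1 : Integrable (fun z => fderiv ℝ P z 1) := by
            apply Continuous.integrable_of_hasCompactSupport
              ((hPsm.continuous_fderiv (by simp)).clm_apply continuous_const)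
            apply HasCompactSupport.intro hcpt
            intro x hx
            simp [hfP0 x hx]
          have i2 : Integrable (fun z => fderiv ℝ Q z Complex.I) := by
            apply Continuous.integrable_of_hasCompactSupport
              ((hQsm.continuous_fderiv (by simp)).clm_apply continuous_const)
            apply HasCompactSupport.intro hcpt
            intro x hx
            simp [hfQ0 x hx]
          rw [integral_add i1 i2, hardyAux_ibp P hPsm hPc 1,
            hardyAux_ibp Q hQsm hQc Complex.I]
          ring
        rw [e1, e2, add_zero]
end
end

section
/- For every open set W ⋐ B with nonempty interior and compact closure in B, there exist M ∈ ℕ and a countable set Z ⊂ B such that the Möbius translates {η_ζ W : ζ ∈ Z} cover B with multiplicity at most M. -/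
open MeasureTheory Real Filter Set Metric
open scoped Topology ENNReal

noncomputable section

/-- The inverse hyperbolic tangent. -/
def artanh (x : ℝ) : ℝ := Real.log ((1 + x) / (1 - x)) / 2

/-- The hyperbolic (geodesic) distance of the Poincaré disk. -/
def hDist (z w : ℂ) : ℝ := 2 * _root_.artanh ‖eta w z‖

/-- The geodesic ball of radius `r` centered at `x` in the Poincaré disk. -/
def geoBall (x : ℂ) (r : ℝ) : Set ℂ := {z ∈ unitDisk | hDist x z < r}

/-- The closed geodesic ball of radius `r` centered at `x` in the Poincaré disk. -/
def geoClosedBall (x : ℂ) (r : ℝ) : Set ℂ := {z ∈ unitDisk | hDist x z ≤ r}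

/-- The hyperbolic (Riemannian) measure `dμ = dx/(1-|x|²)²` of the Poincaré disk. -/
def hyperMeasure : Measure ℂ :=
  (volume.restrict unitDisk).withDensity fun x => ENNReal.ofReal (((1 - ‖x‖ ^ 2) ^ 2)⁻¹)


/-!
The argument runs in the pseudo-hyperbolic distance `‖eta a b‖`, which every `eta ζ` preserves.
Fix `w₀ ∈ W`: openness gives `s > 0` with `W ⊇ {y | ‖eta w₀ y‖ < s}`, and compactness of the
closure gives `q < 1` with `W ⊆ {y | ‖eta w₀ y‖ ≤ q}`. Take a maximal `s`-separated set `Z₀` in the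
disk and, for each `z ∈ Z₀`, the centre `ζ` with `eta ζ w₀ = z`. By maximality every point is
within `s` of some `z`, hence lies in the matching translate of `W`. The translates containing `x`
come from points of `Z₀` within `q` of `x`; moved to the origin by `eta x`, these form an
`s`-separated set in the Euclidean disk of radius `q`, which is then Euclidean separated as well,
so compactness bounds its size independently of `x`.
-/

open ComplexConjugate

lemma norm_one_sub_conj_mul_sq_sub_norm_sub_sq (w z : ℂ) :
    ‖1 - conj w * z‖ ^ 2 - ‖z - w‖ ^ 2 = (1 - ‖w‖ ^ 2) * (1 - ‖z‖ ^ 2) := by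
  apply Complex.ofReal_injective
  push_cast
  simp only [← Complex.mul_conj', map_sub, map_mul, map_one, Complex.conj_conj]
  ring

lemma one_sub_conj_mul_ne_zero {w z : ℂ} (hw : ‖w‖ < 1) (hz : ‖z‖ < 1) :
    1 - conj w * z ≠ 0 := by
  have : ‖conj w * z‖ < 1 := by
    rw [norm_mul, Complex.norm_conj]
    exact mul_lt_one_of_nonneg_of_lt_one_left (norm_nonneg w) hw hz.le
  rw [sub_ne_zero]
  rintro h
  rw [← h, norm_one] at this
  exact this.false

lemma norm_eta_lt_one {w z : ℂ} (hw : ‖w‖ < 1) (hz : ‖z‖ < 1) : ‖eta w z‖ < 1 := by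
  rw [eta, norm_div, div_lt_one (norm_pos_iff.mpr (one_sub_conj_mul_ne_zero hw hz))]
  have hw' : 0 < 1 - ‖w‖ ^ 2 := by nlinarith [norm_nonneg w]
  have hz' : 0 < 1 - ‖z‖ ^ 2 := by nlinarith [norm_nonneg z]
  have := norm_one_sub_conj_mul_sq_sub_norm_sub_sq w z
  exact lt_of_pow_lt_pow_left₀ 2 (norm_nonneg _) (by nlinarith [mul_pos hw' hz'])

lemma norm_eta_comm (w z : ℂ) : ‖eta w z‖ = ‖eta z w‖ := by
  have : 1 - conj z * w = conj (1 - conj w * z) := by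
    simp only [map_sub, map_mul, map_one, Complex.conj_conj]
    ring
  rw [eta, eta, norm_div, norm_div, norm_sub_rev, this, Complex.norm_conj]

@[simp] lemma eta_self (z : ℂ) : eta z z = 0 := by simp [eta]

@[simp] lemma eta_zero_left (z : ℂ) : eta 0 z = z := by simp [eta]

@[simp] lemma eta_zero_right (w : ℂ) : eta w 0 = -w := by simp [eta]

lemma eta_sub_eta {ζ w z : ℂ} (hw : 1 - conj ζ * w ≠ 0) (hz : 1 - conj ζ * z ≠ 0) :
    eta ζ z - eta ζ w = (1 - conj ζ * ζ) * (z - w) / ((1 - conj ζ * z) * (1 - conj ζ * w)) := by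
  rw [eta, eta, div_sub_div _ _ hz hw]
  ring

lemma one_sub_conj_eta_mul_eta {ζ w z : ℂ} (hw : 1 - conj ζ * w ≠ 0) (hz : 1 - conj ζ * z ≠ 0) :
    1 - conj (eta ζ w) * eta ζ z =
      (1 - conj ζ * ζ) * (1 - conj w * z) / (conj (1 - conj ζ * w) * (1 - conj ζ * z)) := by
  have hw' : conj (1 - conj ζ * w) ≠ 0 := (map_ne_zero _).mpr hw
  rw [eta, eta, map_div₀, div_mul_div_comm, one_sub_div (mul_ne_zero hw' hz)]
  simp only [map_sub, map_mul, map_one, Complex.conj_conj]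
  ring

lemma eta_eta_eta {ζ w z : ℂ} (hζ : ‖ζ‖ < 1) (hw : ‖w‖ < 1) (hz : ‖z‖ < 1) :
    eta (eta ζ w) (eta ζ z) = conj (1 - conj ζ * w) / (1 - conj ζ * w) * eta w z := by
  have hζw := one_sub_conj_mul_ne_zero hζ hw
  have hζz := one_sub_conj_mul_ne_zero hζ hz
  have hζζ := one_sub_conj_mul_ne_zero hζ hζ
  have hζw' : conj (1 - conj ζ * w) ≠ 0 := (map_ne_zero _).mpr hζw
  rw [eta, eta_sub_eta hζw hζz, one_sub_conj_eta_mul_eta hζw hζz, eta]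
  field_simp

lemma norm_eta_eta_eta {ζ w z : ℂ} (hζ : ‖ζ‖ < 1) (hw : ‖w‖ < 1) (hz : ‖z‖ < 1) :
    ‖eta (eta ζ w) (eta ζ z)‖ = ‖eta w z‖ := by
  rw [eta_eta_eta hζ hw hz, norm_mul, norm_div, Complex.norm_conj,
    div_self (norm_ne_zero_iff.mpr (one_sub_conj_mul_ne_zero hζ hw)), one_mul]

lemma eta_neg_eta {ζ z : ℂ} (hζ : ‖ζ‖ < 1) (hz : ‖z‖ < 1) : eta (-ζ) (eta ζ z) = z := by
  simpa using eta_eta_eta hζ (norm_zero.trans_lt one_pos) hz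

lemma eta_eta_neg {ζ z : ℂ} (hζ : ‖ζ‖ < 1) (hz : ‖z‖ < 1) : eta ζ (eta (-ζ) z) = z := by
  simpa using eta_neg_eta (ζ := -ζ) (by rwa [norm_neg]) hz

lemma injOn_eta {ζ : ℂ} (hζ : ‖ζ‖ < 1) : InjOn (eta ζ) unitDisk :=
  LeftInvOn.injOn fun _ hz => eta_neg_eta hζ hz

lemma continuousOn_eta {ζ : ℂ} (hζ : ‖ζ‖ < 1) : ContinuousOn (eta ζ) unitDisk :=
  ContinuousOn.div (by fun_prop) (by fun_prop) fun _ hz => one_sub_conj_mul_ne_zero hζ hz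

lemma norm_sub_eq_norm_eta_mul {w z : ℂ} (h : 1 - conj w * z ≠ 0) :
    ‖z - w‖ = ‖eta w z‖ * ‖1 - conj w * z‖ := by
  rw [eta, norm_div, div_mul_cancel₀ _ (norm_ne_zero_iff.mpr h)]

lemma norm_sub_le_two_mul_norm_eta {w z : ℂ} (hw : ‖w‖ < 1) (hz : ‖z‖ < 1) :
    ‖z - w‖ ≤ 2 * ‖eta w z‖ := by
  have : ‖1 - conj w * z‖ ≤ 2 := by
    refine (norm_sub_le _ _).trans ?_
    rw [norm_one, norm_mul, Complex.norm_conj]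
    nlinarith [norm_nonneg w, norm_nonneg z]
  rw [norm_sub_eq_norm_eta_mul (one_sub_conj_mul_ne_zero hw hz), mul_comm]
  exact mul_le_mul_of_nonneg_right this (norm_nonneg _)

lemma norm_eta_mul_le_norm_sub {w z : ℂ} (hw : ‖w‖ < 1) (hz : ‖z‖ < 1) :
    ‖eta w z‖ * (1 - ‖w‖ * ‖z‖) ≤ ‖z - w‖ := by
  have : 1 - ‖w‖ * ‖z‖ ≤ ‖1 - conj w * z‖ := by
    simpa [norm_mul, Complex.norm_conj] using norm_sub_norm_le (1 : ℂ) (conj w * z)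
  rw [norm_sub_eq_norm_eta_mul (one_sub_conj_mul_ne_zero hw hz)]
  exact mul_le_mul_of_nonneg_left this (norm_nonneg _)

/-- Obtained by solving the `ℝ`-linear equation `u - ζ = c * (1 - conj ζ * u)` for `ζ`. -/
def etaCenter (u c : ℂ) : ℂ :=
  ((1 - ‖c‖ ^ 2 : ℝ) * u - (1 - ‖u‖ ^ 2 : ℝ) * c) / (1 - ‖c‖ ^ 2 * ‖u‖ ^ 2 : ℝ)

lemma norm_etaCenter_lt_one {u c : ℂ} (hu : ‖u‖ < 1) (hc : ‖c‖ < 1) : ‖etaCenter u c‖ < 1 := by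
  have hu₀ := norm_nonneg u
  have hc₀ := norm_nonneg c
  have hcu : ‖c‖ * ‖u‖ < 1 := mul_lt_one_of_nonneg_of_lt_one_left hc₀ hc hu.le
  have hD : 0 < 1 - ‖c‖ ^ 2 * ‖u‖ ^ 2 := by nlinarith [mul_nonneg hc₀ hu₀]
  rw [etaCenter, norm_div, Complex.norm_real, Real.norm_of_nonneg hD.le, div_lt_one hD]
  calc _ ≤ ‖((1 - ‖c‖ ^ 2 : ℝ) : ℂ) * u‖ + ‖((1 - ‖u‖ ^ 2 : ℝ) : ℂ) * c‖ := norm_sub_le _ _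
    _ = (1 - ‖c‖ ^ 2) * ‖u‖ + (1 - ‖u‖ ^ 2) * ‖c‖ := by
      rw [norm_mul, norm_mul, Complex.norm_real, Complex.norm_real,
        Real.norm_of_nonneg (by nlinarith), Real.norm_of_nonneg (by nlinarith)]
    _ < 1 - ‖c‖ ^ 2 * ‖u‖ ^ 2 := by
      -- the gap is `(1 - ‖c‖ * ‖u‖) * (1 - ‖u‖) * (1 - ‖c‖)`
      nlinarith [mul_pos (mul_pos (sub_pos.2 hcu) (sub_pos.2 hu)) (sub_pos.2 hc)]

lemma eta_etaCenter {u c : ℂ} (hu : ‖u‖ < 1) (hc : ‖c‖ < 1) : eta (etaCenter u c) u = c := by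
  have hD : ((1 - ‖c‖ ^ 2 * ‖u‖ ^ 2 : ℝ) : ℂ) ≠ 0 := by
    have : ‖c‖ * ‖u‖ < 1 := mul_lt_one_of_nonneg_of_lt_one_left (norm_nonneg c) hc hu.le
    exact_mod_cast (by nlinarith [mul_nonneg (norm_nonneg c) (norm_nonneg u)] :
      (0 : ℝ) < 1 - ‖c‖ ^ 2 * ‖u‖ ^ 2).ne'
  rw [eta, div_eq_iff (one_sub_conj_mul_ne_zero (norm_etaCenter_lt_one hu hc) hu), etaCenter]
  simp only [map_div₀, map_sub, map_mul, Complex.conj_ofReal]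
  field_simp
  push_cast
  simp only [← Complex.mul_conj']
  ring

lemma exists_pairwise_subset_forall_exists_not {α : Type*} (U : Set α) {r : α → α → Prop}
    (hsymm : ∀ x y, r x y → r y x) (hirrefl : ∀ x, ¬ r x x) :
    ∃ S ⊆ U, S.Pairwise r ∧ ∀ x ∈ U, ∃ y ∈ S, ¬ r x y := by
  obtain ⟨S, hS⟩ := zorn_subset {S | S ⊆ U ∧ S.Pairwise r} fun c hc hchain =>
    ⟨⋃₀ c, ⟨sUnion_subset fun s hs => (hc hs).1,
      hchain.pairwise_sUnion.2 fun s hs => (hc hs).2⟩, fun _ => subset_sUnion_of_mem⟩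
  refine ⟨S, hS.prop.1, hS.prop.2, fun x hx => ?_⟩
  by_contra! hfar
  have hxS : x ∉ S := fun hxS => hirrefl x (hfar x hxS)
  have hins : insert x S ∈ {S | S ⊆ U ∧ S.Pairwise r} :=
    ⟨insert_subset hx hS.prop.1,
      pairwise_insert.2 ⟨hS.prop.2, fun y hy _ => ⟨hfar y hy, hsymm _ _ (hfar y hy)⟩⟩⟩
  exact hxS (hS.eq_of_subset hins (subset_insert x S) ▸ mem_insert x S)

lemma IsCompact.exists_ncard_le_of_pairwise_le_dist {X : Type*} [PseudoMetricSpace X]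
    {K : Set X} (hK : IsCompact K) {δ : ℝ} (hδ : 0 < δ) :
    ∃ M : ℕ, ∀ T ⊆ K, T.Pairwise (fun a b => δ ≤ dist a b) → T.Finite ∧ T.ncard ≤ M := by
  obtain ⟨C, -, hC, hKC⟩ := finite_cover_balls_of_compact hK (half_pos hδ)
  refine ⟨C.ncard, fun T hTK hT => ?_⟩
  have hcenter : ∀ a ∈ T, ∃ c ∈ C, a ∈ ball c (δ / 2) := fun a ha => by
    simpa using hKC (hTK ha)
  choose! g hgC hg using hcenter
  have hinj : InjOn g T := fun a ha b hb hab => hT.eq ha hb fun hδab => by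
    have hga : dist a (g a) < δ / 2 := hg a ha
    have hgb : dist b (g a) < δ / 2 := hab ▸ hg b hb
    linarith [dist_triangle_right a b (g a)]
  exact ⟨Finite.of_injOn hgC hinj hC, ncard_le_ncard_of_injOn g hgC hinj hC⟩

lemma exists_ncard_le_of_subset_closedBall {s t : ℝ} (hs : 0 < s) (ht : t < 1) :
    ∃ M : ℕ, ∀ T ⊆ closedBall (0 : ℂ) t, T.Pairwise (fun a b => s ≤ ‖eta a b‖) →
      T.Finite ∧ T.ncard ≤ M := by
  obtain ⟨M, hM⟩ := (isCompact_closedBall (0 : ℂ) t).exists_ncard_le_of_pairwise_le_dist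
    (mul_pos hs (sub_pos.2 ht))
  refine ⟨M, fun T hT hsep => hM T hT (hsep.imp_on fun a ha b hb _ hab => ?_)⟩
  have ha' : ‖a‖ ≤ t := mem_closedBall_zero_iff.1 (hT ha)
  have hb' : ‖b‖ ≤ t := mem_closedBall_zero_iff.1 (hT hb)
  have hab' : ‖a‖ * ‖b‖ ≤ t :=
    (mul_le_of_le_one_right (norm_nonneg a) (hb'.trans ht.le)).trans ha'
  rw [dist_eq_norm, norm_sub_rev]
  calc s * (1 - t) ≤ ‖eta a b‖ * (1 - ‖a‖ * ‖b‖) := by gcongr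
    _ ≤ ‖b - a‖ := norm_eta_mul_le_norm_sub (ha'.trans_lt ht) (hb'.trans_lt ht)

lemma exists_ncard_le_of_norm_eta_le {s t : ℝ} (hs : 0 < s) (ht : t < 1) :
    ∃ M : ℕ, ∀ x ∈ unitDisk, ∀ T ⊆ unitDisk, (∀ z ∈ T, ‖eta x z‖ ≤ t) →
      T.Pairwise (fun a b => s ≤ ‖eta a b‖) → T.Finite ∧ T.ncard ≤ M := by
  obtain ⟨M, hM⟩ := exists_ncard_le_of_subset_closedBall hs ht
  refine ⟨M, fun x hx T hT hTt hsep => ?_⟩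
  have hinj : InjOn (eta x) T := (injOn_eta hx).mono hT
  obtain ⟨hfin, hcard⟩ := hM (eta x '' T)
    (image_subset_iff.2 fun z hz => mem_closedBall_zero_iff.2 (hTt z hz))
    (hinj.pairwise_image.2 fun a ha b hb hab => by
      simpa only [Function.onFun, norm_eta_eta_eta hx (hT ha) (hT hb)] using hsep ha hb hab)
  exact ⟨hfin.of_finite_image hinj, hinj.ncard_image ▸ hcard⟩

lemma countable_of_pairwise_le_norm_eta {s : ℝ} (hs : 0 < s) {S : Set ℂ} (hS : S ⊆ unitDisk)
    (hsep : S.Pairwise (fun a b => s ≤ ‖eta a b‖)) : S.Countable := by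
  refine (countable_iUnion fun n : ℕ => ?_ :
    (⋃ n : ℕ, S ∩ closedBall (0 : ℂ) (1 - 1 / (n + 1))).Countable).mono fun z hz => ?_
  · obtain ⟨M, hM⟩ := exists_ncard_le_of_subset_closedBall hs
      (sub_lt_self 1 (Nat.one_div_pos_of_nat (n := n)))
    exact (hM _ inter_subset_right (hsep.mono inter_subset_left)).1.countable
  · obtain ⟨n, hn⟩ := exists_nat_one_div_lt (sub_pos.2 (show ‖z‖ < 1 from hS hz))
    exact mem_iUnion.2 ⟨n, hz, mem_closedBall_zero_iff.2 (by linarith)⟩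

lemma exists_forall_norm_eta_lt_imp_mem {W : Set ℂ} (hW : IsOpen W) {w : ℂ} (hwW : w ∈ W)
    (hw : ‖w‖ < 1) : ∃ s > 0, ∀ z ∈ unitDisk, ‖eta w z‖ < s → z ∈ W := by
  obtain ⟨ε, hε, hball⟩ := Metric.isOpen_iff.mp hW w hwW
  refine ⟨ε / 2, half_pos hε, fun z hz hzs => hball ?_⟩
  rw [mem_ball, dist_eq_norm]
  linarith [norm_sub_le_two_mul_norm_eta hw hz]

lemma IsCompact.exists_forall_norm_eta_le {K : Set ℂ} (hK : IsCompact K) (hKD : K ⊆ unitDisk)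
    {w : ℂ} (hw : ‖w‖ < 1) : ∃ q < 1, ∀ z ∈ K, ‖eta w z‖ ≤ q := by
  rcases K.eq_empty_or_nonempty with rfl | hne
  · exact ⟨0, one_pos, by simp⟩
  obtain ⟨z₀, hz₀, hmax⟩ := hK.exists_isMaxOn hne ((continuousOn_eta hw).norm.mono hKD)
  exact ⟨_, norm_eta_lt_one hw (hKD hz₀), fun z hz => hmax hz⟩

lemma norm_eta_eta_etaCenter {u c y : ℂ} (hu : ‖u‖ < 1) (hc : ‖c‖ < 1) (hy : ‖y‖ < 1) :
    ‖eta c (eta (etaCenter u c) y)‖ = ‖eta u y‖ := by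
  simpa only [eta_etaCenter hu hc] using norm_eta_eta_eta (norm_etaCenter_lt_one hu hc) hu hy

lemma mem_eta_etaCenter_image {W : Set ℂ} {s : ℝ} {u c x : ℂ} (hu : ‖u‖ < 1) (hc : ‖c‖ < 1)
    (hx : ‖x‖ < 1) (hW : ∀ y ∈ unitDisk, ‖eta u y‖ < s → y ∈ W) (hcx : ‖eta c x‖ < s) :
    x ∈ eta (etaCenter u c) '' W := by
  have hζ := norm_etaCenter_lt_one hu hc
  have hy : ‖eta (-etaCenter u c) x‖ < 1 := norm_eta_lt_one (by rwa [norm_neg]) hx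
  refine ⟨_, hW _ hy ?_, eta_eta_neg hζ hx⟩
  rwa [← norm_eta_eta_etaCenter hu hc hy, eta_eta_neg hζ hx]

lemma norm_eta_le_of_mem_eta_etaCenter_image {W : Set ℂ} {q : ℝ} {u c x : ℂ} (hu : ‖u‖ < 1)
    (hc : ‖c‖ < 1) (hWD : W ⊆ unitDisk) (hW : ∀ y ∈ W, ‖eta u y‖ ≤ q)
    (hx : x ∈ eta (etaCenter u c) '' W) : ‖eta c x‖ ≤ q := by
  obtain ⟨y, hyW, rfl⟩ := hx
  rw [norm_eta_eta_etaCenter hu hc (hWD hyW)]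
  exact hW y hyW

/-- Uniformly-locally-finite covering of the Poincaré disk by Möbius translates of a
fixed nonempty relatively compact open set `W ⋐ B`. -/
theorem mobius_covering (W : Set ℂ) (hWopen : IsOpen W) (hWne : W.Nonempty)
    (hWsub : closure W ⊆ unitDisk) (hWcpt : IsCompact (closure W)) :
    ∃ (M : ℕ) (Z : Set ℂ), Z.Countable ∧ Z ⊆ unitDisk ∧
      (∀ x ∈ unitDisk, ∃ ζ ∈ Z, x ∈ eta ζ '' W) ∧
      (∀ x ∈ unitDisk, {ζ ∈ Z | x ∈ eta ζ '' W}.Finite ∧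
        {ζ ∈ Z | x ∈ eta ζ '' W}.ncard ≤ M) := by
  obtain ⟨w₀, hw₀W⟩ := hWne
  have hWD : W ⊆ unitDisk := subset_closure.trans hWsub
  have hw₀ : ‖w₀‖ < 1 := hWD hw₀W
  obtain ⟨s, hs, hsW⟩ := exists_forall_norm_eta_lt_imp_mem hWopen hw₀W hw₀
  obtain ⟨q, hq, hqW⟩ := hWcpt.exists_forall_norm_eta_le hWsub hw₀
  obtain ⟨M, hM⟩ := exists_ncard_le_of_norm_eta_le hs hq
  obtain ⟨Z₀, hZ₀D, hZ₀sep, hZ₀net⟩ := exists_pairwise_subset_forall_exists_not unitDisk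
    (r := fun a b => s ≤ ‖eta a b‖) (fun a b => (norm_eta_comm a b ▸ ·)) (by simpa using hs)
  refine ⟨M, etaCenter w₀ '' Z₀, (countable_of_pairwise_le_norm_eta hs hZ₀D hZ₀sep).image _,
    image_subset_iff.2 fun z hz => norm_etaCenter_lt_one hw₀ (hZ₀D hz), fun x hx => ?_,
    fun x hx => ?_⟩
  · obtain ⟨z, hz, hxz⟩ := hZ₀net x hx
    exact ⟨_, mem_image_of_mem _ hz, mem_eta_etaCenter_image hw₀ (hZ₀D hz) hx hsW
      (norm_eta_comm z x ▸ not_le.1 hxz)⟩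
  · obtain ⟨hTfin, hTcard⟩ := hM x hx {z ∈ Z₀ | ‖eta x z‖ ≤ q} ((sep_subset _ _).trans hZ₀D)
      (fun z hz => hz.2) (hZ₀sep.mono (sep_subset _ _))
    have hsub : {ζ ∈ etaCenter w₀ '' Z₀ | x ∈ eta ζ '' W} ⊆
        etaCenter w₀ '' {z ∈ Z₀ | ‖eta x z‖ ≤ q} := by
      rintro _ ⟨⟨z, hz, rfl⟩, hxz⟩
      exact ⟨z, ⟨hz, norm_eta_comm x z ▸
        norm_eta_le_of_mem_eta_etaCenter_image hw₀ (hZ₀D hz) hWD (fun y hy => hqW y (subset_closure hy)) hxz⟩, rfl⟩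
    exact ⟨(hTfin.image _).subset hsub,
      (ncard_le_ncard hsub (hTfin.image _)).trans ((ncard_image_le hTfin).trans hTcard)⟩
end
end
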